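/- Let 0 < μ < 1 and ρ ∈ [0,1], and set ν = μ² + ρμ(1−μ). Then the sharp three-vote interval has width U₁(μ,ν) − L₁(μ,ν) = 2μ(1−μ)ρ(1−ρ), and consequently U₁(μ,ν) − L₁(μ,ν) ≤ 1/8. -/
import Mathlib


/-- The closed-form three-vote lower endpoint `L₁(μ,ν) = ν + 2(μ−ν)²/(1−μ)`. -/
noncomputable def L1 (μ ν : ℝ) : ℝ := ν + 2 * (μ - ν) ^ 2 / (1 - μ)

/-- The closed-form three-vote upper endpoint `U₁(μ,ν) = 3ν − 2ν²/μ`. -/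
noncomputable def U1 (μ ν : ℝ) : ℝ := 3 * ν - 2 * ν ^ 2 / μ

/-- **Three-vote interval width.** Let `0 < μ < 1`, `ρ ∈ [0,1]`, and
`ν = μ² + ρμ(1−μ)`.  Then `U₁(μ,ν) − L₁(μ,ν) = 2μ(1−μ)ρ(1−ρ)`, and consequently
`U₁(μ,ν) − L₁(μ,ν) ≤ 1/8`. -/
theorem three_vote_width (μ ρ ν : ℝ) (hμ0 : 0 < μ) (hμ1 : μ < 1)
    (hρ0 : 0 ≤ ρ) (hρ1 : ρ ≤ 1) (hν : ν = μ ^ 2 + ρ * μ * (1 - μ)) :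
    U1 μ ν - L1 μ ν = 2 * μ * (1 - μ) * ρ * (1 - ρ) ∧ U1 μ ν - L1 μ ν ≤ 1 / 8 := by
  have h1 : 1 - μ ≠ 0 := by linarith
  have h2 : μ ≠ 0 := ne_of_gt hμ0
  have key : U1 μ ν - L1 μ ν = 2 * μ * (1 - μ) * ρ * (1 - ρ) := by
    simp only [U1, L1, hν]
    field_simp
    ring
  refine ⟨key, ?_⟩
  rw [key]
  nlinarith [sq_nonneg (μ - 1/2), sq_nonneg (ρ - 1/2), mul_nonneg hρ0 (by linarith : (0:ℝ) ≤ 1 - ρ), sq_nonneg ((2*μ-1)*(2*ρ-1))]
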